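/- arXiv:2404.10191 — 4 statements merged into one kernel-verified Lean document; each statement's English description precedes it below -/
import Mathlib

section
/- Let P be a symmetric positive definite n×n real matrix, R a symmetric positive definite m×m real matrix, and H an m×n real matrix, and let K* = P·Hᵀ·(H·P·Hᵀ + R)⁻¹ be the Kalman gain. Then for every n×m real matrix K, one has the identity P_K - P_{K*} = (K - K*)·(H·P·Hᵀ + R)·(K - K*)ᵀ. -/
open Matrix

/-- The posterior covariance matrix `P_K = (I - K·H)·P·(I - K·H)ᵀ + K·R·Kᵀ`. -/
noncomputable def postCov {n m : ℕ} (P : Matrix (Fin n) (Fin n) ℝ)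
    (R : Matrix (Fin m) (Fin m) ℝ) (H : Matrix (Fin m) (Fin n) ℝ)
    (K : Matrix (Fin n) (Fin m) ℝ) : Matrix (Fin n) (Fin n) ℝ :=
  (1 - K * H) * P * (1 - K * H)ᵀ + K * R * Kᵀ

/-- The Kalman gain `K* = P·Hᵀ·(H·P·Hᵀ + R)⁻¹`. -/
noncomputable def kalmanGain {n m : ℕ} (P : Matrix (Fin n) (Fin n) ℝ)
    (R : Matrix (Fin m) (Fin m) ℝ) (H : Matrix (Fin m) (Fin n) ℝ) :
    Matrix (Fin n) (Fin m) ℝ :=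
  P * Hᵀ * (H * P * Hᵀ + R)⁻¹

/-! Write `S = H·P·Hᵀ + R`. Since `K* S = P Hᵀ` and `S` is symmetric, completing the square in `K`
gives `P_K = P - K* S K*ᵀ + (K - K*) S (K - K*)ᵀ` for every `K`; at `K = K*` the last term
vanishes. -/

namespace Matrix

variable {ι κ α : Type*} [Fintype κ] [CommRing α]

theorem sub_mul_mul_transpose_sub_of_mul_eq {K G B : Matrix ι κ α} {S : Matrix κ κ α}
    (hS : S.IsSymm) (hG : G * S = B) :
    (K - G) * S * (K - G)ᵀ = K * S * Kᵀ - K * Bᵀ - B * Kᵀ + G * S * Gᵀ := by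
  subst hG
  rw [transpose_mul, hS.eq]
  simp only [transpose_sub, Matrix.sub_mul, Matrix.mul_sub, Matrix.mul_assoc]
  abel

end Matrix

section Kalman

variable {n m : ℕ} {P : Matrix (Fin n) (Fin n) ℝ} {R : Matrix (Fin m) (Fin m) ℝ}
  {H : Matrix (Fin m) (Fin n) ℝ}

theorem postCov_eq_sub_sub_add (hP : P.IsSymm) (K : Matrix (Fin n) (Fin m) ℝ) :
    postCov P R H K = P - K * (P * Hᵀ)ᵀ - P * Hᵀ * Kᵀ + K * (H * P * Hᵀ + R) * Kᵀ := by
  rw [postCov, transpose_mul, hP.eq]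
  simp only [transpose_sub, transpose_mul, transpose_one, Matrix.mul_sub, Matrix.sub_mul,
    Matrix.mul_add, Matrix.add_mul, Matrix.mul_one, Matrix.one_mul, transpose_transpose,
    Matrix.mul_assoc]
  abel

theorem postCov_eq_sub_add_of_mul_eq {G : Matrix (Fin n) (Fin m) ℝ} (hP : P.IsSymm)
    (hS : (H * P * Hᵀ + R).IsSymm) (hG : G * (H * P * Hᵀ + R) = P * Hᵀ)
    (K : Matrix (Fin n) (Fin m) ℝ) :
    postCov P R H K = P - G * (H * P * Hᵀ + R) * Gᵀ +
      (K - G) * (H * P * Hᵀ + R) * (K - G)ᵀ := by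
  rw [postCov_eq_sub_sub_add hP, sub_mul_mul_transpose_sub_of_mul_eq hS hG]
  abel

theorem kalmanGain_mul (h : IsUnit (H * P * Hᵀ + R).det) :
    kalmanGain P R H * (H * P * Hᵀ + R) = P * Hᵀ :=
  nonsing_inv_mul_cancel_right _ _ h

end Kalman

theorem postCov_sub_postCov_kalmanGain {n m : ℕ} (P : Matrix (Fin n) (Fin n) ℝ)
    (R : Matrix (Fin m) (Fin m) ℝ) (H : Matrix (Fin m) (Fin n) ℝ)
    (hP : P.PosDef) (hR : R.PosDef) (K : Matrix (Fin n) (Fin m) ℝ) :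
    postCov P R H K - postCov P R H (kalmanGain P R H) =
      (K - kalmanGain P R H) * (H * P * Hᵀ + R) * (K - kalmanGain P R H)ᵀ := by
  have hPs : P.IsSymm := isHermitian_iff_isSymm.mp hP.isHermitian
  have hS : (H * P * Hᵀ + R).PosDef := by
    simpa using PosDef.posSemidef_add (hP.posSemidef.mul_mul_conjTranspose_same H) hR
  have hGain := kalmanGain_mul ((isUnit_iff_isUnit_det _).mp hS.isUnit)
  have hSs : (H * P * Hᵀ + R).IsSymm := isHermitian_iff_isSymm.mp hS.isHermitian
  rw [postCov_eq_sub_add_of_mul_eq hPs hSs hGain K,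
    postCov_eq_sub_add_of_mul_eq hPs hSs hGain (kalmanGain P R H)]
  simp
end

section
/- Let P be a symmetric positive definite n×n real matrix, R a symmetric positive definite m×m real matrix, H an m×n real matrix, and K* = P·Hᵀ·(H·P·Hᵀ + R)⁻¹ the Kalman gain. Fix a real number λ that is not an eigenvalue of P_{K*}. Then the Fréchet derivative of the real-valued map K ↦ det(λ·I - P_K) at the point K* is the zero linear map; i.e., K* is a critical point of K ↦ Φ(P_K, λ). -/
open Matrix

attribute [local instance] Matrix.normedAddCommGroup Matrix.normedSpace

/-!
Completing the square around the Kalman gain `K*` with `S = H·P·Hᵀ + R` gives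
`P_{K* + D} = P_{K*} + D·S·Dᵀ`, because the gain equation `(I - K*·H)·P·Hᵀ = K*·R` kills the
cross terms. Hence `K ↦ P_K` takes the same value at `K* + D` and `K* - D`, so its derivative at
`K*` vanishes, and by the chain rule so does that of every differentiable function of `P_K`.
-/

theorem hasFDerivAt_zero_of_forall_add_eq_sub {𝕜 E F : Type*} [NontriviallyNormedField 𝕜]
    [CharZero 𝕜] [NormedAddCommGroup E] [NormedSpace 𝕜 E] [NormedAddCommGroup F]
    [NormedSpace 𝕜 F] {f : E → F} {x : E} (hf : DifferentiableAt 𝕜 f x)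
    (hsymm : ∀ h, f (x + h) = f (x - h)) : HasFDerivAt f (0 : E →L[𝕜] F) x := by
  suffices fderiv 𝕜 f x = 0 from this ▸ hf.hasFDerivAt
  have hx₁ : HasFDerivAt f (fderiv 𝕜 f x) (x + 0) := by simpa using hf.hasFDerivAt
  have hx₂ : HasFDerivAt f (fderiv 𝕜 f x) (x - 0) := by simpa using hf.hasFDerivAt
  have h₁ := hx₁.comp 0 ((hasFDerivAt_id 0).const_add x)
  have h₂ := hx₂.comp 0 ((hasFDerivAt_id 0).const_sub x)
  rw [show f ∘ (fun h => x - h) = f ∘ (fun h => x + h) from funext fun h => (hsymm h).symm] at h₂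
  ext v
  have hv : fderiv 𝕜 f x v = -fderiv 𝕜 f x v := by
    simpa using congrArg (fun L => L v) (h₁.unique h₂)
  have htwo : (2 : 𝕜) • fderiv 𝕜 f x v = 0 := by
    rw [two_smul]; nth_rewrite 1 [hv]; exact neg_add_cancel _
  simpa using htwo

section
variable {𝕜 E : Type*} [NontriviallyNormedField 𝕜] [NormedAddCommGroup E] [NormedSpace 𝕜 E]
  {l m n : Type*} [Fintype m] [Fintype n]

@[fun_prop]
theorem Differentiable.matrix_mul {f : E → Matrix l m 𝕜} {g : E → Matrix m n 𝕜}
    (hf : Differentiable 𝕜 f) (hg : Differentiable 𝕜 g) :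
    Differentiable 𝕜 fun x => f x * g x := by
  refine differentiable_pi.2 fun i => differentiable_pi.2 fun j => ?_
  simp only [mul_apply]
  have hf' := fun i k => differentiable_pi.1 (differentiable_pi.1 hf i) k
  have hg' := fun k j => differentiable_pi.1 (differentiable_pi.1 hg k) j
  fun_prop

@[fun_prop]
theorem Differentiable.matrix_transpose {f : E → Matrix m n 𝕜} (hf : Differentiable 𝕜 f) :
    Differentiable 𝕜 fun x => (f x)ᵀ :=
  differentiable_pi.2 fun i => differentiable_pi.2 fun j =>
    differentiable_pi.1 (differentiable_pi.1 hf j) i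

@[fun_prop]
theorem Differentiable.matrix_det [DecidableEq n] {f : E → Matrix n n 𝕜} (hf : Differentiable 𝕜 f) :
    Differentiable 𝕜 fun x => (f x).det := by
  simp only [det_apply']
  have hf' := fun i k => differentiable_pi.1 (differentiable_pi.1 hf i) k
  fun_prop
end

theorem isUnit_det_mul_mul_transpose_add {n m : Type*} [Fintype n] [Fintype m] [DecidableEq m]
    {P : Matrix n n ℝ} {R : Matrix m m ℝ} (hP : P.PosDef) (hR : R.PosDef)
    (H : Matrix m n ℝ) : IsUnit (H * P * Hᵀ + R).det := by
  have hHPH : (H * P * Hᵀ).PosSemidef := by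
    simpa only [conjTranspose_eq_transpose_of_trivial] using
      hP.posSemidef.mul_mul_conjTranspose_same H
  exact (isUnit_iff_isUnit_det _).mp (PosDef.posSemidef_add hHPH hR).isUnit

section
variable {n m : ℕ} {P : Matrix (Fin n) (Fin n) ℝ} {R : Matrix (Fin m) (Fin m) ℝ}
  {H : Matrix (Fin m) (Fin n) ℝ}

theorem one_sub_kalmanGain_mul_mul_mul_transpose (hS : IsUnit (H * P * Hᵀ + R).det) :
    (1 - kalmanGain P R H * H) * P * Hᵀ = kalmanGain P R H * R := by
  have hgain : kalmanGain P R H * (H * P * Hᵀ + R) = P * Hᵀ :=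
    nonsing_inv_mul_cancel_right _ _ hS
  calc (1 - kalmanGain P R H * H) * P * Hᵀ
      = kalmanGain P R H * (H * P * Hᵀ + R) - kalmanGain P R H * (H * P * Hᵀ) := by
        rw [hgain]; simp only [Matrix.sub_mul, Matrix.one_mul, Matrix.mul_assoc]
    _ = kalmanGain P R H * R := by rw [← Matrix.mul_sub, add_sub_cancel_left]

theorem postCov_kalmanGain_add (hP : P.IsSymm) (hR : R.IsSymm)
    (hS : IsUnit (H * P * Hᵀ + R).det) (D : Matrix (Fin n) (Fin m) ℝ) :
    postCov P R H (kalmanGain P R H + D) =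
      postCov P R H (kalmanGain P R H) + D * (H * P * Hᵀ + R) * Dᵀ := by
  set K := kalmanGain P R H
  have hgain := one_sub_kalmanGain_mul_mul_mul_transpose hS
  have hgainT : H * P * (1 - K * H)ᵀ = R * Kᵀ := by
    simpa [transpose_mul, hP.eq, hR.eq, Matrix.mul_assoc] using congrArg transpose hgain
  have expand : postCov P R H (K + D) = postCov P R H K + D * (H * P * Hᵀ + R) * Dᵀ
      + ((K * R - (1 - K * H) * P * Hᵀ) * Dᵀ + D * (R * Kᵀ - H * P * (1 - K * H)ᵀ)) := by
    simp only [postCov, transpose_add, transpose_sub, transpose_mul, transpose_one,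
      Matrix.sub_mul, Matrix.mul_sub, Matrix.add_mul, Matrix.mul_add, Matrix.one_mul,
      Matrix.mul_one, Matrix.mul_assoc]
    abel
  rw [expand, hgain, hgainT, sub_self, sub_self, Matrix.zero_mul, Matrix.mul_zero, add_zero,
    add_zero]

theorem differentiable_postCov : Differentiable ℝ (postCov P R H) := by
  unfold postCov
  fun_prop

theorem hasFDerivAt_postCov_kalmanGain (hP : P.IsSymm) (hR : R.IsSymm)
    (hS : IsUnit (H * P * Hᵀ + R).det) :
    HasFDerivAt (postCov P R H) (0 : Matrix (Fin n) (Fin m) ℝ →L[ℝ] Matrix (Fin n) (Fin n) ℝ)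
      (kalmanGain P R H) := by
  refine hasFDerivAt_zero_of_forall_add_eq_sub differentiable_postCov.differentiableAt fun D => ?_
  simp only [sub_eq_add_neg, postCov_kalmanGain_add hP hR hS, transpose_neg, Matrix.neg_mul,
    Matrix.mul_neg, neg_neg]

end

theorem fderiv_det_charpoly_postCov_kalmanGain_general {n m : ℕ} (P : Matrix (Fin n) (Fin n) ℝ)
    (R : Matrix (Fin m) (Fin m) ℝ) (H : Matrix (Fin m) (Fin n) ℝ)
    (hP : P.PosDef) (hR : R.PosDef)
    (lam : ℝ) :
    fderiv ℝ (fun K : Matrix (Fin n) (Fin m) ℝ =>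
        (lam • (1 : Matrix (Fin n) (Fin n) ℝ) - postCov P R H K).det)
      (kalmanGain P R H) = 0 := by
  have hcrit := hasFDerivAt_postCov_kalmanGain (isHermitian_iff_isSymm.mp hP.isHermitian)
    (isHermitian_iff_isSymm.mp hR.isHermitian) (isUnit_det_mul_mul_transpose_add hP hR H)
  have hdet : DifferentiableAt ℝ (fun M : Matrix (Fin n) (Fin n) ℝ => (lam • 1 - M).det)
      (postCov P R H (kalmanGain P R H)) := by
    fun_prop
  exact (hdet.hasFDerivAt.comp _ hcrit).fderiv.trans (ContinuousLinearMap.comp_zero _)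

theorem fderiv_det_charpoly_postCov_kalmanGain {n m : ℕ} (P : Matrix (Fin n) (Fin n) ℝ)
    (R : Matrix (Fin m) (Fin m) ℝ) (H : Matrix (Fin m) (Fin n) ℝ)
    (hP : P.PosDef) (hR : R.PosDef)
    (hstar : (postCov P R H (kalmanGain P R H)).IsHermitian)
    (lam : ℝ) (hlam : ∀ i, lam ≠ hstar.eigenvalues i) :
    fderiv ℝ (fun K : Matrix (Fin n) (Fin m) ℝ =>
        (lam • (1 : Matrix (Fin n) (Fin n) ℝ) - postCov P R H K).det)
      (kalmanGain P R H) = 0 :=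
  fderiv_det_charpoly_postCov_kalmanGain_general P R H hP hR lam
end

section
/- Let P be a symmetric positive definite n×n real matrix, R a symmetric positive definite m×m real matrix, H an m×n real matrix, and K* = P·Hᵀ·(H·P·Hᵀ + R)⁻¹ the Kalman gain. Then for every even index i and every n×m real matrix K, |a_i^{K*}| ≤ |a_i^K|, i.e. the absolute value of the coefficient of λ^i in the characteristic polynomial of P_K is minimized at K = K*. -/
/-!
The gap `P_K - P_{K*} = (K - K*) (H P Hᵀ + R) (K - K*)ᵀ` is positive semidefinite, so
`P_{K*} ≤ P_K` in the Loewner order. For a positive semidefinite `M` all signs in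
`a_{n-k} = (-1)^k · (sum of the k × k principal minors of M)` agree, so `|a_{n-k}|` is that sum
of minors. Principal submatrices inherit the Loewner order, and the determinant is monotone on
positive definite matrices: writing `A = Cᴴ C`, `det (A + D) = det A · det (1 + C⁻ᴴ D C⁻¹)`,
and the last factor is a product of eigenvalues `≥ 1`.
-/

open Matrix

section Determinant

variable {n : Type*} [Fintype n] [DecidableEq n]

theorem Matrix.PosSemidef.one_le_det_one_add {Q : Matrix n n ℝ} (hQ : Q.PosSemidef) :
    1 ≤ det (1 + Q) := by
  set U : Matrix n n ℝ := (hQ.isHermitian.eigenvectorUnitary : Matrix n n ℝ)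
  have hU : U * star U = 1 := Unitary.mul_star_self_of_mem (SetLike.coe_mem _)
  have hU' : star U * U = 1 := Unitary.star_mul_self_of_mem (SetLike.coe_mem _)
  have hconj :
      1 + Q = U * (1 + diagonal (RCLike.ofReal ∘ hQ.isHermitian.eigenvalues)) * star U := by
    conv_lhs => rw [hQ.isHermitian.spectral_theorem]
    rw [Unitary.conjStarAlgAut_apply, Matrix.mul_add, Matrix.add_mul, Matrix.mul_one, hU]
  rw [hconj, det_conj_of_mul_eq_one hU hU', ← diagonal_one, diagonal_add, det_diagonal]
  exact Finset.one_le_prod fun i _ => le_add_of_nonneg_right (hQ.eigenvalues_nonneg i)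

open scoped MatrixOrder in
theorem Matrix.PosDef.det_le_det_of_posSemidef_sub {A B : Matrix n n ℝ} (hA : A.PosDef)
    (hBA : (B - A).PosSemidef) : det A ≤ det B := by
  obtain ⟨C, hC, rfl⟩ := CStarAlgebra.isStrictlyPositive_iff_eq_star_mul_self.mp
    hA.isStrictlyPositive
  rw [star_eq_conjTranspose] at hA hBA ⊢
  have hCinv : C⁻¹ * C = 1 := nonsing_inv_mul C ((isUnit_iff_isUnit_det C).mp hC)
  set Q := C⁻¹ᴴ * (B - Cᴴ * C) * C⁻¹
  have hB : B = Cᴴ * (1 + Q) * C := by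
    have hCinvH : Cᴴ * C⁻¹ᴴ = 1 := by rw [← conjTranspose_mul, hCinv, conjTranspose_one]
    simp only [Q, Matrix.mul_add, Matrix.add_mul, Matrix.mul_one, ← Matrix.mul_assoc, hCinvH,
      Matrix.one_mul]
    rw [Matrix.mul_assoc _ C⁻¹, hCinv, Matrix.mul_one, add_sub_cancel]
  calc det (Cᴴ * C) = det (Cᴴ * C) * 1 := (mul_one _).symm
    _ ≤ det (Cᴴ * C) * det (1 + Q) :=
      mul_le_mul_of_nonneg_left (hBA.conjTranspose_mul_mul_same C⁻¹).one_le_det_one_add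
        hA.det_pos.le
    _ = det B := by rw [hB, det_mul, det_mul, det_mul]; ring

theorem Matrix.PosSemidef.abs_charpoly_coeff_card_sub {M : Matrix n n ℝ} (hM : M.PosSemidef)
    {k : ℕ} (hk : k ≤ Fintype.card n) :
    |M.charpoly.coeff (Fintype.card n - k)| =
      ∑ s ∈ Finset.univ.powersetCard k, det (M.submatrix (Subtype.val : s → n) Subtype.val) := by
  rw [charpoly_coeff_eq_sum_minors M k hk, abs_mul, abs_pow, abs_neg, abs_one, one_pow, one_mul,
    abs_of_nonneg (Finset.sum_nonneg fun s _ => (hM.submatrix _).det_nonneg)]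

theorem Matrix.PosDef.abs_charpoly_coeff_le_of_posSemidef_sub {A B : Matrix n n ℝ}
    (hA : A.PosDef) (hBA : (B - A).PosSemidef) (i : ℕ) :
    |A.charpoly.coeff i| ≤ |B.charpoly.coeff i| := by
  rcases le_or_gt i (Fintype.card n) with hi | hi
  · have hB : B.PosSemidef := by simpa using hA.posSemidef.add hBA
    obtain ⟨k, hk, rfl⟩ : ∃ k ≤ Fintype.card n, i = Fintype.card n - k :=
      ⟨_, Nat.sub_le _ i, (Nat.sub_sub_self hi).symm⟩
    rw [hA.posSemidef.abs_charpoly_coeff_card_sub hk, hB.abs_charpoly_coeff_card_sub hk]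
    exact Finset.sum_le_sum fun s _ =>
      (hA.submatrix Subtype.val_injective).det_le_det_of_posSemidef_sub (hBA.submatrix _)
  · have hcoeff (M : Matrix n n ℝ) : M.charpoly.coeff i = 0 :=
      Polynomial.coeff_eq_zero_of_natDegree_lt (M.charpoly_natDegree_eq_dim ▸ hi)
    rw [hcoeff A, hcoeff B]

end Determinant

section Kalman

variable {n m : ℕ} {P : Matrix (Fin n) (Fin n) ℝ} {R : Matrix (Fin m) (Fin m) ℝ}
  (H : Matrix (Fin m) (Fin n) ℝ)

theorem postCov_posDef (hP : P.PosDef) (hR : R.PosDef) (K : Matrix (Fin n) (Fin m) ℝ) :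
    (postCov P R H K).PosDef := by
  have hP' : ((1 - K * H) * P * (1 - K * H)ᵀ).PosSemidef := by
    simpa only [conjTranspose_eq_transpose_of_trivial] using
      hP.posSemidef.mul_mul_conjTranspose_same (1 - K * H)
  have hR' : (K * R * Kᵀ).PosSemidef := by
    simpa only [conjTranspose_eq_transpose_of_trivial] using
      hR.posSemidef.mul_mul_conjTranspose_same K
  refine .of_dotProduct_mulVec_pos (hP'.add hR').isHermitian fun x hx => ?_
  set u := (1 - K * H)ᵀ *ᵥ x
  set v := Kᵀ *ᵥ x
  have quad {k : ℕ} (X : Matrix (Fin n) (Fin k) ℝ) (A : Matrix (Fin k) (Fin k) ℝ) :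
      star x ⬝ᵥ (X * A * Xᵀ) *ᵥ x = star (Xᵀ *ᵥ x) ⬝ᵥ A *ᵥ (Xᵀ *ᵥ x) := by
    rw [← mulVec_mulVec, ← mulVec_mulVec, dotProduct_mulVec, star_trivial, star_trivial,
      ← mulVec_transpose]
  have hquad : star x ⬝ᵥ postCov P R H K *ᵥ x = star u ⬝ᵥ P *ᵥ u + star v ⬝ᵥ R *ᵥ v := by
    rw [postCov, add_mulVec, dotProduct_add, quad, quad]
  have hu : u = x - Hᵀ *ᵥ v := by
    simp only [u, v, transpose_sub, transpose_one, transpose_mul, sub_mulVec, one_mulVec,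
      mulVec_mulVec]
  rw [hquad]
  rcases eq_or_ne v 0 with hv | hv
  · rw [hv, mulVec_zero, sub_zero] at hu
    rw [hv, mulVec_zero, dotProduct_zero, add_zero, hu]
    exact hP.dotProduct_mulVec_pos hx
  · exact add_pos_of_nonneg_of_pos (hP.posSemidef.dotProduct_mulVec_nonneg u)
      (hR.dotProduct_mulVec_pos hv)

theorem postCov_eq_sub_add (K : Matrix (Fin n) (Fin m) ℝ) :
    postCov P R H K = P - K * (H * P) - P * Hᵀ * Kᵀ + K * (H * P * Hᵀ + R) * Kᵀ := by
  rw [postCov, transpose_sub, transpose_one, transpose_mul]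
  simp only [Matrix.mul_add, Matrix.add_mul, Matrix.mul_sub, Matrix.sub_mul, Matrix.mul_assoc,
    Matrix.one_mul, Matrix.mul_one]
  abel

theorem postCov_eq_postCov_kalmanGain_add (hP : P.IsSymm) (hR : R.IsSymm)
    (hS : IsUnit (H * P * Hᵀ + R).det) (K : Matrix (Fin n) (Fin m) ℝ) :
    postCov P R H K = postCov P R H (kalmanGain P R H) +
      (K - kalmanGain P R H) * (H * P * Hᵀ + R) * (K - kalmanGain P R H)ᵀ := by
  rw [postCov_eq_sub_add, postCov_eq_sub_add]
  have hSsymm : (H * P * Hᵀ + R).IsSymm := by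
    simp only [IsSymm, transpose_add, transpose_mul, transpose_transpose, hP.eq, hR.eq,
      Matrix.mul_assoc]
  have hPH : P * Hᵀ = kalmanGain P R H * (H * P * Hᵀ + R) := by
    rw [kalmanGain, Matrix.mul_assoc, nonsing_inv_mul _ hS, Matrix.mul_one]
  set S := H * P * Hᵀ + R
  set K₀ := kalmanGain P R H
  have hHP : H * P = S * K₀ᵀ := by
    rw [← hSsymm.eq, ← transpose_mul, ← hPH, transpose_mul, transpose_transpose, hP.eq]
  rw [hPH, hHP, transpose_sub]
  simp only [Matrix.mul_sub, Matrix.sub_mul, Matrix.mul_assoc]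
  abel

theorem postCov_sub_postCov_kalmanGain_posSemidef (hP : P.PosDef) (hR : R.PosDef)
    (K : Matrix (Fin n) (Fin m) ℝ) :
    (postCov P R H K - postCov P R H (kalmanGain P R H)).PosSemidef := by
  have hS : (H * P * Hᵀ + R).PosDef := by
    refine PosDef.posSemidef_add ?_ hR
    simpa only [conjTranspose_eq_transpose_of_trivial] using
      hP.posSemidef.mul_mul_conjTranspose_same H
  rw [postCov_eq_postCov_kalmanGain_add H (isHermitian_iff_isSymm.mp hP.isHermitian)
    (isHermitian_iff_isSymm.mp hR.isHermitian) (isUnit_iff_ne_zero.mpr hS.det_pos.ne') K,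
    add_sub_cancel_left]
  simpa only [conjTranspose_eq_transpose_of_trivial] using
    hS.posSemidef.mul_mul_conjTranspose_same (K - kalmanGain P R H)

end Kalman

theorem abs_charpoly_coeff_postCov_kalmanGain_le_general {n m : ℕ} (P : Matrix (Fin n) (Fin n) ℝ)
    (R : Matrix (Fin m) (Fin m) ℝ) (H : Matrix (Fin m) (Fin n) ℝ)
    (hP : P.PosDef) (hR : R.PosDef) (i : ℕ)
    (K : Matrix (Fin n) (Fin m) ℝ) :
    |(postCov P R H (kalmanGain P R H)).charpoly.coeff i| ≤
      |(postCov P R H K).charpoly.coeff i| :=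
  (postCov_posDef H hP hR _).abs_charpoly_coeff_le_of_posSemidef_sub
    (postCov_sub_postCov_kalmanGain_posSemidef H hP hR K) i

theorem abs_charpoly_coeff_postCov_kalmanGain_le {n m : ℕ} (P : Matrix (Fin n) (Fin n) ℝ)
    (R : Matrix (Fin m) (Fin m) ℝ) (H : Matrix (Fin m) (Fin n) ℝ)
    (hP : P.PosDef) (hR : R.PosDef) (i : ℕ) (hi : Even i)
    (K : Matrix (Fin n) (Fin m) ℝ) :
    |(postCov P R H (kalmanGain P R H)).charpoly.coeff i| ≤
      |(postCov P R H K).charpoly.coeff i| :=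
  abs_charpoly_coeff_postCov_kalmanGain_le_general P R H hP hR i K
end

section
/- Let P be a symmetric positive definite n×n real matrix, R a symmetric positive definite m×m real matrix, H an m×n real matrix, and K* = P·Hᵀ·(H·P·Hᵀ + R)⁻¹ the Kalman gain. Let Q be a symmetric multivariate polynomial in n variables over ℝ (i.e. Q is invariant under every permutation of its variables). Then the Fréchet derivative of the real-valued map K ↦ Q(λ_1^K, …, λ_n^K), where λ_1^K, …, λ_n^K are the eigenvalues (with multiplicity) of the symmetric positive definite matrix P_K, at the point K* is the zero linear map; i.e., K* is a critical point of K ↦ Q evaluated at the eigenvalues of P_K. -/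
open Matrix

attribute [local instance] Matrix.normedAddCommGroup Matrix.normedSpace


/-!
With `S = H P Hᵀ + R`, completing the square gives
`P_K = P - K* S K*ᵀ + (K - K*) S (K - K*)ᵀ`, so `K ↦ P_K` has zero derivative at `K*`.
A symmetric polynomial in the eigenvalues of a symmetric matrix is a polynomial in their
elementary symmetric functions, i.e. (Vieta) in the coefficients of the characteristic polynomial,
which are polynomials in the matrix entries. So `K ↦ Q(λ^K)` factors through `K ↦ P_K` via a
differentiable map, and the chain rule finishes.
-/

theorem ContinuousLinearMap.hasFDerivAt_bilinear_sub_sub {𝕜 E G : Type*}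
    [NontriviallyNormedField 𝕜] [NormedAddCommGroup E] [NormedSpace 𝕜 E]
    [NormedAddCommGroup G] [NormedSpace 𝕜 G] (B : E →L[𝕜] E →L[𝕜] G) (x₀ : E) :
    HasFDerivAt (fun x => B (x - x₀) (x - x₀)) (0 : E →L[𝕜] G) x₀ := by
  have hsub : HasFDerivAt (fun x : E => x - x₀) (ContinuousLinearMap.id 𝕜 E) x₀ :=
    (hasFDerivAt_id x₀).sub_const x₀
  simpa using B.hasFDerivAt_of_bilinear hsub hsub

namespace Matrix

variable {ι : Type*} [Fintype ι] [DecidableEq ι]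

theorem differentiable_charpoly_coeff {𝕜 : Type*} [NontriviallyNormedField 𝕜] (k : ℕ) :
    Differentiable 𝕜 fun A : Matrix ι ι 𝕜 => A.charpoly.coeff k := by
  have hcoeff (A : Matrix ι ι 𝕜) : A.charpoly.coeff k =
      MvPolynomial.aeval (fun ij : ι × ι => A ij.1 ij.2) ((charpoly.univ 𝕜 ι).coeff k) := by
    rw [MvPolynomial.aeval_eq_eval₂Hom, charpoly.univ_coeff_eval₂Hom]
    rfl
  have hentry (ij : ι × ι) (A : Matrix ι ι 𝕜) :
      AnalyticAt 𝕜 (fun A : Matrix ι ι 𝕜 => A ij.1 ij.2) A :=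
    ((ContinuousLinearMap.proj ij.2).comp
      (ContinuousLinearMap.proj (R := 𝕜) (φ := fun _ : ι => ι → 𝕜) ij.1)).analyticAt A
  simp_rw [hcoeff]
  exact fun A => (AnalyticAt.aeval_mvPolynomial (fun ij => hentry ij A) _).differentiableAt

open Polynomial in
theorem IsHermitian.eval_eigenvalues_esymm {A : Matrix ι ι ℝ} (hA : A.IsHermitian) {k : ℕ}
    (hk : k ≤ Fintype.card ι) :
    MvPolynomial.eval hA.eigenvalues (MvPolynomial.esymm ι ℝ k)
      = (-1) ^ k * A.charpoly.coeff (Fintype.card ι - k) := by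
  have hcard : Multiset.card (Finset.univ.val.map hA.eigenvalues) = Fintype.card ι := by simp
  have hprod : A.charpoly = ((Finset.univ.val.map hA.eigenvalues).map fun t => X - C t).prod := by
    rw [hA.charpoly_eq, Finset.prod_eq_multiset_prod, Multiset.map_map]
    rfl
  rw [hprod, Multiset.prod_X_sub_C_coeff _ (by omega), hcard, Nat.sub_sub_self hk, ← mul_assoc,
    ← pow_add, Even.neg_one_pow ⟨k, rfl⟩, one_mul]
  exact MvPolynomial.aeval_esymm_eq_multiset_esymm ι ℝ k hA.eigenvalues

theorem hasFDerivAt_mul_mul_transpose_sub_sub {𝕜 l m : Type*} [NontriviallyNormedField 𝕜]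
    [CompleteSpace 𝕜] [Fintype l] [Fintype m] (S : Matrix m m 𝕜) (K₀ : Matrix l m 𝕜) :
    HasFDerivAt (fun K : Matrix l m 𝕜 => (K - K₀) * S * (K - K₀)ᵀ)
      (0 : Matrix l m 𝕜 →L[𝕜] Matrix l l 𝕜) K₀ := by
  let B : Matrix l m 𝕜 →ₗ[𝕜] Matrix l m 𝕜 →ₗ[𝕜] Matrix l l 𝕜 :=
    LinearMap.mk₂ 𝕜 (fun X Y => X * S * Yᵀ)
      (fun _ _ _ => by simp only [Matrix.add_mul])
      (fun _ _ _ => by simp only [Matrix.smul_mul])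
      (fun _ _ _ => by simp only [transpose_add, Matrix.mul_add])
      (fun _ _ _ => by simp only [transpose_smul, Matrix.mul_smul])
  exact (LinearMap.toContinuousLinearMap
    (LinearMap.toContinuousLinearMap.toLinearMap ∘ₗ B)).hasFDerivAt_bilinear_sub_sub K₀

end Matrix

open MvPolynomial in
theorem MvPolynomial.IsSymmetric.exists_differentiable_eq_eval_eigenvalues {ι : Type*}
    [Fintype ι] [DecidableEq ι] {Q : MvPolynomial ι ℝ} (hQ : Q.IsSymmetric) :
    ∃ g : Matrix ι ι ℝ → ℝ, Differentiable ℝ g ∧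
      ∀ (A : Matrix ι ι ℝ) (hA : A.IsHermitian), eval hA.eigenvalues Q = g A := by
  obtain ⟨q, hq⟩ := esymmAlgHom_surjective ℝ le_rfl ⟨Q, hQ⟩
  have hQq : Q = aeval (fun i : Fin (Fintype.card ι) => esymm ι ℝ (i + 1)) q := by
    rw [← esymmAlgHom_apply, hq]
  let c (A : Matrix ι ι ℝ) (i : Fin (Fintype.card ι)) : ℝ :=
    (-1) ^ ((i : ℕ) + 1) * A.charpoly.coeff (Fintype.card ι - (i + 1))
  refine ⟨fun A => eval (c A) q, ?_, fun A hA => ?_⟩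
  · have hc : Differentiable ℝ c := differentiable_pi.mpr fun i =>
      (Matrix.differentiable_charpoly_coeff _).const_mul _
    exact fun A => (AnalyticOnNhd.eval_mvPolynomial q _ trivial).differentiableAt.comp A (hc A)
  · have hci (i : Fin (Fintype.card ι)) : eval hA.eigenvalues (esymm ι ℝ (i + 1)) = c A i :=
      hA.eval_eigenvalues_esymm i.isLt
    rw [hQq, aeval_eq_bind₁]
    exact (aeval_bind₁ _ _ _).trans (congrArg (fun x => eval x q) (_root_.funext hci))

section Kalman

variable {n m : ℕ} {P : Matrix (Fin n) (Fin n) ℝ} {R : Matrix (Fin m) (Fin m) ℝ}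
  {H : Matrix (Fin m) (Fin n) ℝ}

theorem postCov_eq_sub_add_kalmanGain (hP : P.IsSymm) (hR : R.IsSymm)
    (hS : IsUnit (H * P * Hᵀ + R).det) (K : Matrix (Fin n) (Fin m) ℝ) :
    postCov P R H K = P - kalmanGain P R H * (H * P * Hᵀ + R) * (kalmanGain P R H)ᵀ +
      (K - kalmanGain P R H) * (H * P * Hᵀ + R) * (K - kalmanGain P R H)ᵀ := by
  set S := H * P * Hᵀ + R with hS_def
  have hSt : Sᵀ = S := by
    rw [hS_def, transpose_add, transpose_mul, transpose_mul, transpose_transpose, hP.eq, hR.eq,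
      Matrix.mul_assoc]
  have hK₀S : kalmanGain P R H * S = P * Hᵀ := by
    rw [kalmanGain, Matrix.mul_assoc, nonsing_inv_mul S hS, Matrix.mul_one]
  have hSK₀ : S * (kalmanGain P R H)ᵀ = H * P := by
    rw [← hSt, ← transpose_mul, hK₀S, transpose_mul, transpose_transpose, hP.eq]
  set K₀ := kalmanGain P R H
  have hexpand : postCov P R H K = P - K * (S * K₀ᵀ) - K₀ * S * Kᵀ + K * S * Kᵀ := by
    rw [hSK₀, hK₀S, postCov, hS_def]
    simp only [transpose_sub, transpose_mul, transpose_one, Matrix.mul_add, Matrix.add_mul,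
      Matrix.mul_assoc, Matrix.mul_one, Matrix.one_mul, Matrix.sub_mul, Matrix.mul_sub]
    abel
  rw [hexpand]
  simp only [transpose_sub, Matrix.mul_sub, Matrix.sub_mul, Matrix.mul_assoc]
  abel

end Kalman

theorem fderiv_symmPoly_eigenvalues_postCov_kalmanGain {n m : ℕ}
    (P : Matrix (Fin n) (Fin n) ℝ)
    (R : Matrix (Fin m) (Fin m) ℝ) (H : Matrix (Fin m) (Fin n) ℝ)
    (hP : P.PosDef) (hR : R.PosDef)
    (hPK : ∀ K : Matrix (Fin n) (Fin m) ℝ, (postCov P R H K).IsHermitian)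
    (Q : MvPolynomial (Fin n) ℝ) (hQ : Q.IsSymmetric) :
    fderiv ℝ (fun K : Matrix (Fin n) (Fin m) ℝ =>
        MvPolynomial.eval (fun i => (hPK K).eigenvalues i) Q)
      (kalmanGain P R H) = 0 := by
  obtain ⟨g, hg, hgQ⟩ := hQ.exists_differentiable_eq_eval_eigenvalues
  have hS : (H * P * Hᵀ + R).PosDef := by
    simpa only [conjTranspose_eq_transpose_of_trivial] using
      PosDef.posSemidef_add (hP.posSemidef.mul_mul_conjTranspose_same H) hR
  have hcomp : HasFDerivAt (g ∘ postCov P R H) (0 : Matrix (Fin n) (Fin m) ℝ →L[ℝ] ℝ)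
      (kalmanGain P R H) := by
    refine ((hg _).hasFDerivAt.comp _ ?_).congr_fderiv (ContinuousLinearMap.comp_zero _)
    exact hasFDerivAt_postCov_kalmanGain (isHermitian_iff_isSymm.mp hP.isHermitian)
      (isHermitian_iff_isSymm.mp hR.isHermitian) hS.det_pos.ne'.isUnit
  rw [show (fun K => MvPolynomial.eval (fun i => (hPK K).eigenvalues i) Q) = g ∘ postCov P R H
    from funext fun K => hgQ _ (hPK K)]
  exact hcomp.fderiv
end
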